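/- The formal power series 2 log(1+x)/(2+x) is a Hurwitz series, i.e., n! times its x^n coefficient is an integer for every n. -/

import Mathlib

/-!
Writing `2 log(1+x)/(2+x) = ∑ c_n x^n`, the relation `(2+x) · ∑ c_n x^n = 2 log(1+x)` shows
`c_{n} = (-1)^{n-1} 2^{-n} ∑_{j=1}^{n} 2^j/j`. Since `1 - 4x(1-x) = (1-2x)²`, expanding
`-2 log(1-2x) = ∑_j (4x(1-x))^j / j` gives
`2 ∑_{j=1}^{n} 2^j/j = ∑_{j=1}^{n} (-1)^{n-j} 4^j C(j-1, n-j) / j`.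
A term on the right vanishes unless `2j ≥ n+1`, so `2^{n+1} ∣ 4^j`, and `j ∣ n!`: hence
`n! c_n ∈ ℤ`.
-/

open PowerSeries

/-- A Hurwitz series: a formal power series `∑ f_n x^n / n!` over `ℚ` with all
`f_n = n! · (coefficient of x^n)` integers. -/
def IsHurwitz (f : PowerSeries ℚ) : Prop :=
  ∀ n : ℕ, ∃ m : ℤ, (n.factorial : ℚ) * PowerSeries.coeff (R := ℚ) n f = (m : ℚ)

/-- The formal power series `log(1+x) = ∑_{n≥1} (-1)^{n-1} x^n/n` over `ℚ`. -/
noncomputable def logOnePlusX : PowerSeries ℚ :=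
  PowerSeries.mk fun n => if n = 0 then 0 else (-1 : ℚ) ^ (n - 1) / n

open Finset
open scoped Nat

section Lucas

variable {R : Type*} [CommRing R]

/-- The coefficient of `x^n` in `1 / (1 - p x - p q x²) = ∑_i (p x (1 + q x))^i`. -/
def lucasSum (p q : R) (n : ℕ) : R :=
  ∑ x ∈ antidiagonal n, (x.1.choose x.2 : R) * p ^ x.1 * q ^ x.2

theorem lucasSum_add_two (p q : R) (n : ℕ) :
    lucasSum p q (n + 2) = p * lucasSum p q (n + 1) + p * q * lucasSum p q n := by
  simp only [lucasSum, Nat.sum_antidiagonal_succ (n := n + 1), Nat.sum_antidiagonal_succ' (n := n),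
    Nat.choose_succ_succ', Nat.choose_zero_right, Nat.choose_zero_succ]
  simp only [Nat.cast_add, add_mul, sum_add_distrib, mul_add, mul_sum]
  ring_nf

theorem lucasSum_four_neg_one (n : ℕ) : lucasSum (4 : R) (-1) n = (n + 1) * 2 ^ n := by
  induction n using Nat.twoStepInduction with
  | zero => simp [lucasSum]
  | one => simp [lucasSum, Nat.antidiagonal_succ]; norm_num
  | more n ih₀ ih₁ =>
    rw [lucasSum_add_two, ih₀, ih₁]
    push_cast
    ring

end Lucas

/-- The coefficient of `x^(m+1)` in `-log(1 - 4x(1-x)) = ∑_j (4x(1-x))^j / j`. -/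
noncomputable def negLogQuadCoeff (m : ℕ) : ℚ :=
  ∑ x ∈ antidiagonal m, (-1) ^ x.2 * 4 ^ (x.1 + 1) / (x.1 + 1) * ((x.1 + 1).choose x.2 : ℚ)

/-- The coefficient of `x^(m+1)` in `-log(1 - 4x(1-x)) / (1-x)`, that is, the partial sum
`∑_{j ≤ m} negLogQuadCoeff j`. -/
noncomputable def negLogQuadPartialSum (m : ℕ) : ℚ :=
  ∑ x ∈ antidiagonal m, (-1) ^ x.2 * 4 ^ (x.1 + 1) / (x.1 + 1) * (x.1.choose x.2 : ℚ)

theorem sum_neg_one_pow_mul_four_pow_mul_choose_succ (m : ℕ) :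
    ∑ x ∈ antidiagonal m, (-1) ^ x.2 * 4 ^ (x.1 + 1) * ((x.1 + 1).choose x.2 : ℚ)
      = lucasSum 4 (-1) (m + 1) := by
  rw [lucasSum, Nat.sum_antidiagonal_succ]
  simp [mul_comm, mul_left_comm]

theorem sum_neg_one_pow_mul_four_pow_mul_choose_div (m : ℕ) :
    ∑ x ∈ antidiagonal (m + 1),
        (-1) ^ x.2 * 4 ^ (x.1 + 1) * x.2 * ((x.1 + 1).choose x.2 : ℚ) / (x.1 + 1)
      = -4 * lucasSum 4 (-1) m := by
  rw [lucasSum, Nat.sum_antidiagonal_succ', mul_sum]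
  simp only [Nat.cast_zero, mul_zero, zero_mul, zero_div, zero_add]
  refine sum_congr rfl fun x _ ↦ ?_
  have h : ((x.1 + 1 : ℕ) : ℚ) * x.1.choose x.2 = ((x.1 + 1).choose (x.2 + 1) : ℚ) * (x.2 + 1 : ℕ) := by
    exact_mod_cast Nat.add_one_mul_choose_eq x.1 x.2
  push_cast at h ⊢
  field_simp
  linear_combination (-1) ^ x.2 * 4 ^ (x.1 + 1) * h

-- `log (1-2x)² = 2 log (1-2x)`, read off coefficientwise.
theorem negLogQuadCoeff_eq (m : ℕ) : negLogQuadCoeff m = 2 ^ (m + 2) / (m + 1) := by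
  rcases m with _ | m
  · simp [negLogQuadCoeff]; norm_num
  -- split the factor `(m + 2) / (i + 1) = 1 + k / (i + 1)` of each term
  have key : (m + 2 : ℚ) * negLogQuadCoeff (m + 1)
      = lucasSum 4 (-1) (m + 2) - 4 * lucasSum 4 (-1) m := by
    rw [negLogQuadCoeff, mul_sum, sub_eq_add_neg, ← neg_mul,
      ← sum_neg_one_pow_mul_four_pow_mul_choose_succ, ← sum_neg_one_pow_mul_four_pow_mul_choose_div,
      ← sum_add_distrib]
    refine sum_congr rfl fun x hx ↦ ?_
    have hx : (x.1 : ℚ) + x.2 = m + 1 := by exact_mod_cast mem_antidiagonal.mp hx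
    field_simp
    linear_combination -((x.1 + 1).choose x.2 : ℚ) * hx
  rw [eq_div_iff (by positivity), mul_comm, Nat.cast_succ, add_assoc, one_add_one_eq_two, key,
    lucasSum_four_neg_one, lucasSum_four_neg_one]
  push_cast
  ring

theorem negLogQuadPartialSum_succ (m : ℕ) :
    negLogQuadPartialSum (m + 1) = negLogQuadPartialSum m + negLogQuadCoeff (m + 1) := by
  simp only [negLogQuadPartialSum, negLogQuadCoeff, Nat.sum_antidiagonal_succ' (n := m),
    Nat.choose_succ_succ', Nat.choose_zero_right]
  push_cast
  simp only [mul_add, sum_add_distrib, pow_succ, neg_mul, mul_neg, neg_div, sum_neg_distrib]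
  ring_nf

theorem factorial_mul_negLogQuadPartialSum_div_mem_bot (m : ℕ) :
    ((m + 1)! : ℚ) * negLogQuadPartialSum m / 2 ^ (m + 2) ∈ (⊥ : Subring ℚ) := by
  rw [negLogQuadPartialSum, mul_sum, sum_div]
  refine Subring.sum_mem _ fun ⟨i, k⟩ hx ↦ ?_
  obtain rfl : i + k = m := mem_antidiagonal.mp hx
  rcases lt_or_ge i k with hik | hki
  · simp [Nat.choose_eq_zero_of_lt hik]
  obtain ⟨d, rfl⟩ := Nat.exists_eq_add_of_le hki
  obtain ⟨c, hc⟩ := Nat.dvd_factorial (Nat.succ_pos (k + d)) (by omega : k + d + 1 ≤ k + d + k + 1)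
  refine Subring.mem_bot.mpr ⟨(-1) ^ k * c * 2 ^ d * (k + d).choose k, ?_⟩
  have h4 : (4 : ℚ) ^ (k + d + 1) = 2 ^ d * 2 ^ (k + d + k + 2) := by
    rw [← pow_add, show (4 : ℚ) = 2 ^ 2 by norm_num, ← pow_mul]
    ring_nf
  rw [hc, h4]
  push_cast
  field_simp

theorem coeff_succ_mul_C_add_X {R : Type*} [Semiring R] (g : R⟦X⟧) (a : R) (n : ℕ) :
    coeff (n + 1) (g * (C a + X)) = coeff (n + 1) g * a + coeff n g := by
  rw [mul_add, map_add, coeff_mul_C, coeff_succ_mul_X]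

theorem C_two_mul_logOnePlusX_mul_inv_mul :
    C (2 : ℚ) * logOnePlusX * (C 2 + X)⁻¹ * (C 2 + X) = C 2 * logOnePlusX := by
  rw [mul_assoc _ _⁻¹, PowerSeries.inv_mul_cancel _ (by simp), mul_one]

theorem coeff_succ_logOnePlusX (n : ℕ) : coeff (n + 1) logOnePlusX = (-1) ^ n / (n + 1) := by
  simp [logOnePlusX]

theorem coeff_zero_C_two_mul_logOnePlusX_mul_inv :
    coeff 0 (C (2 : ℚ) * logOnePlusX * (C 2 + X)⁻¹) = 0 := by
  simp [logOnePlusX]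

theorem coeff_succ_C_two_mul_logOnePlusX_mul_inv (m : ℕ) :
    coeff (m + 1) (C (2 : ℚ) * logOnePlusX * (C 2 + X)⁻¹)
      = (-1) ^ m * negLogQuadPartialSum m / 2 ^ (m + 2) := by
  have hrec (n : ℕ) := congrArg (coeff (n + 1)) C_two_mul_logOnePlusX_mul_inv_mul
  simp only [coeff_succ_mul_C_add_X, coeff_C_mul, coeff_succ_logOnePlusX] at hrec
  induction m with
  | zero =>
    have h := hrec 0
    rw [coeff_zero_C_two_mul_logOnePlusX_mul_inv] at h
    simp [negLogQuadPartialSum] at h ⊢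
    linarith
  | succ m ih =>
    have h := hrec (m + 1)
    rw [ih] at h
    rw [negLogQuadPartialSum_succ, negLogQuadCoeff_eq]
    push_cast at h ⊢
    field_simp at h ⊢
    linear_combination h

/-- The formal power series `2·log(1+x)/(2+x)` is a Hurwitz series. -/
theorem two_log_div_isHurwitz :
    IsHurwitz (PowerSeries.C (R := ℚ) 2 * logOnePlusX * (PowerSeries.C (R := ℚ) 2 + PowerSeries.X)⁻¹) := by
  rintro (_ | m)
  · exact ⟨0, by simp [coeff_zero_C_two_mul_logOnePlusX_mul_inv]⟩
  obtain ⟨z, hz⟩ := Subring.mem_bot.mp (factorial_mul_negLogQuadPartialSum_div_mem_bot m)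
  refine ⟨(-1) ^ m * z, ?_⟩
  rw [coeff_succ_C_two_mul_logOnePlusX_mul_inv]
  push_cast
  rw [hz]
  ring
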